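/- Let g₁, g₂ be binary cubic forms over K with the same nonzero discriminant, cubic covariants G₁, G₂. The bicovariant B(X₁,Y₁,X₂,Y₂) = g₂(X₂,Y₂)G₁(X₁,Y₁) − G₂(X₂,Y₂)g₁(X₁,Y₁) is divisible by X₁Y₂ − X₂Y₁ if and only if g₂ = ±g₁. -/
import Mathlib


/-- Discriminant of the binary cubic `aX³+bX²Y+cXY²+dY³`. -/
def cubicDisc {K : Type*} [CommRing K] (a b c d : K) : K :=
  b^2*c^2 - 4*a*c^3 - 4*b^3*d - 27*a^2*d^2 + 18*a*b*c*d

/-- Coefficient of `X³` in `g(rX+tY, sX+uY)`. -/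
def tA {K : Type*} [CommRing K] (a b c d r s t u : K) : K :=
  a*r^3 + b*r^2*s + c*r*s^2 + d*s^3

/-- Coefficient of `X²Y` in `g(rX+tY, sX+uY)`. -/
def tB {K : Type*} [CommRing K] (a b c d r s t u : K) : K :=
  3*a*r^2*t + b*(r^2*u + 2*r*s*t) + c*(2*r*s*u + s^2*t) + 3*d*s^2*u

/-- Coefficient of `XY²` in `g(rX+tY, sX+uY)`. -/
def tC {K : Type*} [CommRing K] (a b c d r s t u : K) : K :=
  3*a*r*t^2 + b*(2*r*t*u + s*t^2) + c*(r*u^2 + 2*s*t*u) + 3*d*s*u^2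

/-- Coefficient of `Y³` in `g(rX+tY, sX+uY)`. -/
def tD {K : Type*} [CommRing K] (a b c d r s t u : K) : K :=
  a*t^3 + b*t^2*u + c*t*u^2 + d*u^3

open MvPolynomial in
/-- The binary cubic with coefficients `a,b,c,d` evaluated at a pair of
polynomial variables. -/
noncomputable def bcF {K : Type*} [CommRing K] (a b c d : K)
    (x y : MvPolynomial (Fin 4) K) : MvPolynomial (Fin 4) K :=
  C a * x^3 + C b * x^2*y + C c * x*y^2 + C d * y^3

open MvPolynomial in
/-- The cubic covariant `G` of the binary cubic with coefficients `a,b,c,d`,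
evaluated at a pair of polynomial variables. -/
noncomputable def bcG {K : Type*} [CommRing K] (a b c d : K)
    (x y : MvPolynomial (Fin 4) K) : MvPolynomial (Fin 4) K :=
  C (2*b^3 + 27*a^2*d - 9*a*b*c) * x^3 + C (3*(b^2*c + 9*a*b*d - 6*a*c^2)) * x^2*y
    - C (3*(b*c^2 + 9*a*c*d - 6*b^2*d)) * x*y^2 - C (2*c^3 + 27*a*d^2 - 9*b*c*d) * y^3

open MvPolynomial in
/-- The bicubic bicovariant
`B = g₂(X₂,Y₂)G₁(X₁,Y₁) − G₂(X₂,Y₂)g₁(X₁,Y₁)` in `K[X₁,Y₁,X₂,Y₂]`,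
with variables `X₁,Y₁,X₂,Y₂` indexed `0,1,2,3`. -/
noncomputable def bicov {K : Type*} [CommRing K] (a₁ b₁ c₁ d₁ a₂ b₂ c₂ d₂ : K) :
    MvPolynomial (Fin 4) K :=
  bcF a₂ b₂ c₂ d₂ (X 2) (X 3) * bcG a₁ b₁ c₁ d₁ (X 0) (X 1)
    - bcG a₂ b₂ c₂ d₂ (X 2) (X 3) * bcF a₁ b₁ c₁ d₁ (X 0) (X 1)

open MvPolynomial in
/-- The bilinear form `L_M = −sX₁X₂ + rX₁Y₂ − uY₁X₂ + tY₁Y₂` attached to the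
matrix `M = [[r,s],[t,u]]`. -/
noncomputable def LM {K : Type*} [CommRing K] (r s t u : K) : MvPolynomial (Fin 4) K :=
  C (-s) * X 0 * X 2 + C r * X 0 * X 3 + C (-u) * X 1 * X 2 + C t * X 1 * X 3

open Polynomial in
set_option maxHeartbeats 2000000 in
private lemma cubic_aux {K : Type*} [Field K] (h3 : (3:K) ≠ 0)
    (a b c d l : K)
    (hΔ : cubicDisc a b c d ≠ 0)
    (hl4 : cubicDisc a b c d = cubicDisc (l*a) (l*b) (l*c) (l*d))
    (hE0 : (l - l^3) * (27*a^3*d - 9*a^2*b*c + 2*a*b^3) = 0)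
    (hE1 : (l - l^3) * (54*a^2*b*d - 18*a^2*c^2 - 6*a*b^2*c + 2*b^4) = 0)
    (hE2 : (l - l^3) * (45*a*b^2*d - 30*a*b*c^2 + 5*b^3*c) = 0)
    (hE3 : (l - l^3) * (-20*a*c^3 + 20*b^3*d) = 0)
    (hE4 : (l - l^3) * (-45*a*c^2*d + 30*b^2*c*d - 5*b*c^3) = 0)
    (hE5 : (l - l^3) * (-54*a*c*d^2 + 18*b^2*d^2 + 6*b*c^2*d - 2*c^4) = 0)
    (hE6 : (l - l^3) * (-27*a*d^3 + 9*b*c*d^2 - 2*c^3*d) = 0) :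
    l = 1 ∨ l = -1 := by
  by_cases hL : l - l^3 = 0
  · have hl0 : l ≠ 0 := by
      rintro rfl
      apply hΔ
      have := hl4
      simp only [zero_mul] at this
      rw [this]
      simp [cubicDisc]
    have hsq : l^2 = 1 := by
      have h := mul_left_cancel₀ hl0 (show l * l^2 = l * 1 by linear_combination -hL)
      exact h
    have hfac : (l-1)*(l+1) = 0 := by linear_combination hsq
    rcases mul_eq_zero.1 hfac with h | h
    · left; linear_combination h
    · right; linear_combination h
  · exfalso
    have f0 : (27*a^3*d - 9*a^2*b*c + 2*a*b^3 : K) = 0 := by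
      rcases mul_eq_zero.1 hE0 with h | h
      · exact absurd h hL
      · exact h
    have f1 : (54*a^2*b*d - 18*a^2*c^2 - 6*a*b^2*c + 2*b^4 : K) = 0 := by
      rcases mul_eq_zero.1 hE1 with h | h
      · exact absurd h hL
      · exact h
    have f2 : (45*a*b^2*d - 30*a*b*c^2 + 5*b^3*c : K) = 0 := by
      rcases mul_eq_zero.1 hE2 with h | h
      · exact absurd h hL
      · exact h
    have f3 : (-20*a*c^3 + 20*b^3*d : K) = 0 := by
      rcases mul_eq_zero.1 hE3 with h | h
      · exact absurd h hL
      · exact h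
    have f4 : (-45*a*c^2*d + 30*b^2*c*d - 5*b*c^3 : K) = 0 := by
      rcases mul_eq_zero.1 hE4 with h | h
      · exact absurd h hL
      · exact h
    have f5 : (-54*a*c*d^2 + 18*b^2*d^2 + 6*b*c^2*d - 2*c^4 : K) = 0 := by
      rcases mul_eq_zero.1 hE5 with h | h
      · exact absurd h hL
      · exact h
    have f6 : (-27*a*d^3 + 9*b*c*d^2 - 2*c^3*d : K) = 0 := by
      rcases mul_eq_zero.1 hE6 with h | h
      · exact absurd h hL
      · exact h
    have hfg : (Polynomial.C a * Polynomial.X ^ 3 + Polynomial.C b * Polynomial.X ^ 2 + Polynomial.C c * Polynomial.X ^ 1 + Polynomial.C d * Polynomial.X ^ 0) * (Polynomial.C (27*a^2*d - 9*a*b*c + 2*b^3) * Polynomial.X ^ 3 + Polynomial.C (27*a*b*d - 18*a*c^2 + 3*b^2*c) * Polynomial.X ^ 2 + Polynomial.C (-27*a*c*d + 18*b^2*d - 3*b*c^2) * Polynomial.X ^ 1 + Polynomial.C (-27*a*d^2 + 9*b*c*d - 2*c^3) * Polynomial.X ^ 0) = (0 : Polynomial K) := by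
      have hexp : (Polynomial.C a * Polynomial.X ^ 3 + Polynomial.C b * Polynomial.X ^ 2 + Polynomial.C c * Polynomial.X ^ 1 + Polynomial.C d * Polynomial.X ^ 0) * (Polynomial.C (27*a^2*d - 9*a*b*c + 2*b^3) * Polynomial.X ^ 3 + Polynomial.C (27*a*b*d - 18*a*c^2 + 3*b^2*c) * Polynomial.X ^ 2 + Polynomial.C (-27*a*c*d + 18*b^2*d - 3*b*c^2) * Polynomial.X ^ 1 + Polynomial.C (-27*a*d^2 + 9*b*c*d - 2*c^3) * Polynomial.X ^ 0)
          = Polynomial.C (27*a^3*d - 9*a^2*b*c + 2*a*b^3) * Polynomial.X ^ 6 + Polynomial.C (54*a^2*b*d - 18*a^2*c^2 - 6*a*b^2*c + 2*b^4) * Polynomial.X ^ 5 + Polynomial.C (45*a*b^2*d - 30*a*b*c^2 + 5*b^3*c) * Polynomial.X ^ 4 + Polynomial.C (-20*a*c^3 + 20*b^3*d) * Polynomial.X ^ 3 + Polynomial.C (-45*a*c^2*d + 30*b^2*c*d - 5*b*c^3) * Polynomial.X ^ 2 + Polynomial.C (-54*a*c*d^2 + 18*b^2*d^2 + 6*b*c^2*d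 - 2*c^4) * Polynomial.X ^ 1 + Polynomial.C (-27*a*d^3 + 9*b*c*d^2 - 2*c^3*d) * Polynomial.X ^ 0 := by
        simp only [map_add, map_sub, map_mul, map_pow, map_neg, map_ofNat]
        ring
      rw [hexp, f0, f1, f2, f3, f4, f5, f6]
      simp
    rcases mul_eq_zero.1 hfg with hf | hg
    · apply hΔ
      have ha : a = 0 := by
        have hco := congrArg (fun p => Polynomial.coeff p 3) hf
        simp only [Polynomial.coeff_add, Polynomial.coeff_C_mul, Polynomial.coeff_X_pow, Polynomial.coeff_zero] at hco
        norm_num at hco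
        linear_combination hco
      have hb : b = 0 := by
        have hco := congrArg (fun p => Polynomial.coeff p 2) hf
        simp only [Polynomial.coeff_add, Polynomial.coeff_C_mul, Polynomial.coeff_X_pow, Polynomial.coeff_zero] at hco
        norm_num at hco
        linear_combination hco
      have hc : c = 0 := by
        have hco := congrArg (fun p => Polynomial.coeff p 1) hf
        simp only [Polynomial.coeff_add, Polynomial.coeff_C_mul, Polynomial.coeff_X_pow, Polynomial.coeff_zero] at hco
        norm_num at hco
        linear_combination hco
      have hd : d = 0 := by
        have hco := congrArg (fun p => Polynomial.coeff p 0) hf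
        simp only [Polynomial.coeff_add, Polynomial.coeff_C_mul, Polynomial.coeff_X_pow, Polynomial.coeff_zero] at hco
        norm_num at hco
        linear_combination hco
      simp [cubicDisc, ha, hb, hc, hd]
    · exfalso
      have hg0 : (27*a^2*d - 9*a*b*c + 2*b^3 : K) = 0 := by
        have hco := congrArg (fun p => Polynomial.coeff p 3) hg
        simp only [Polynomial.coeff_add, Polynomial.coeff_C_mul, Polynomial.coeff_X_pow, Polynomial.coeff_zero] at hco
        norm_num at hco
        linear_combination hco
      have hg1 : (27*a*b*d - 18*a*c^2 + 3*b^2*c : K) = 0 := by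
        have hco := congrArg (fun p => Polynomial.coeff p 2) hg
        simp only [Polynomial.coeff_add, Polynomial.coeff_C_mul, Polynomial.coeff_X_pow, Polynomial.coeff_zero] at hco
        norm_num at hco
        linear_combination hco
      have hg2 : (-27*a*c*d + 18*b^2*d - 3*b*c^2 : K) = 0 := by
        have hco := congrArg (fun p => Polynomial.coeff p 1) hg
        simp only [Polynomial.coeff_add, Polynomial.coeff_C_mul, Polynomial.coeff_X_pow, Polynomial.coeff_zero] at hco
        norm_num at hco
        linear_combination hco
      have hg3 : (-27*a*d^2 + 9*b*c*d - 2*c^3 : K) = 0 := by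
        have hco := congrArg (fun p => Polynomial.coeff p 0) hg
        simp only [Polynomial.coeff_add, Polynomial.coeff_C_mul, Polynomial.coeff_X_pow, Polynomial.coeff_zero] at hco
        norm_num at hco
        linear_combination hco
      have h9 : (9:K) ≠ 0 := by
        rw [show (9:K) = 3^2 by norm_num]; exact pow_ne_zero 2 h3
      have hkey : (9:K) * cubicDisc a b c d = 0 := by
        simp only [cubicDisc]
        linear_combination (-9*d) * hg0 + (2*c) * hg1 + (-b) * hg2
      rcases mul_eq_zero.1 hkey with h | h
      · exact h9 h
      · exact hΔ h

set_option maxHeartbeats 2000000 in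
private lemma cubic_aux2 {K : Type*} [Field K] (h3 : (3:K) ≠ 0)
    (a₁ b₁ c₁ d₁ a₂ b₂ c₂ d₂ l : K)
    (hΔ : cubicDisc a₁ b₁ c₁ d₁ ≠ 0)
    (hΔeq : cubicDisc a₁ b₁ c₁ d₁ = cubicDisc a₂ b₂ c₂ d₂)
    (he : a₂ = l * a₁) (hf : b₂ = l * b₁) (hg : c₂ = l * c₁) (hh : d₂ = l * d₁)
    (hE0 : (27*a₁^2*d₁*a₂ - 9*a₁*b₁*c₁*a₂ - 27*a₁*a₂^2*d₂ + 9*a₁*a₂*b₂*c₂ - 2*a₁*b₂^3 + 2*b₁^3*a₂) = 0)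
    (hE1 : (27*a₁^2*d₁*b₂ - 9*a₁*b₁*c₁*b₂ + 27*a₁*b₁*d₁*a₂ - 18*a₁*c₁^2*a₂ - 27*a₁*a₂*b₂*d₂ + 18*a₁*a₂*c₂^2 - 3*a₁*b₂^2*c₂ + 2*b₁^3*b₂ + 3*b₁^2*c₁*a₂ - 27*b₁*a₂^2*d₂ + 9*b₁*a₂*b₂*c₂ - 2*b₁*b₂^3) = 0)
    (hE2 : (27*a₁^2*d₁*c₂ - 9*a₁*b₁*c₁*c₂ + 27*a₁*b₁*d₁*b₂ - 18*a₁*c₁^2*b₂ - 27*a₁*c₁*d₁*a₂ + 27*a₁*a₂*c₂*d₂ - 18*a₁*b₂^2*d₂ + 3*a₁*b₂*c₂^2 + 2*b₁^3*c₂ + 3*b₁^2*c₁*b₂ + 18*b₁^2*d₁*a₂ - 3*b₁*c₁^2*a₂ - 27*b₁*a₂*b₂*d₂ + 18*b₁*a₂*c₂^2 - 3*b₁*b₂^2*c₂ - 27*c₁*a₂^2*d₂ + 9*c₁*a₂*b₂*c₂ - 2*c₁*b₂^3) = 0)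
    (hE3 : (27*a₁^2*d₁*d₂ - 9*a₁*b₁*c₁*d₂ + 27*a₁*b₁*d₁*c₂ - 18*a₁*c₁^2*c₂ - 27*a₁*c₁*d₁*b₂ - 27*a₁*d₁^2*a₂ + 27*a₁*a₂*d₂^2 - 9*a₁*b₂*c₂*d₂ + 2*a₁*c₂^3 + 2*b₁^3*d₂ + 3*b₁^2*c₁*c₂ + 18*b₁^2*d₁*b₂ - 3*b₁*c₁^2*b₂ + 9*b₁*c₁*d₁*a₂ + 27*b₁*a₂*c₂*d₂ - 18*b₁*b₂^2*d₂ + 3*b₁*b₂*c₂^2 - 2*c₁^3*a₂ - 27*c₁*a₂*b₂*d₂ + 18*c₁*a₂*c₂^2 - 3*c₁*b₂^2*c₂ - 27*d₁*a₂^2*d₂ + 9*d₁*a₂*b₂*c₂ - 2*d₁*b₂^3) = 0)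
    (hE4 : (27*a₁*b₁*d₁*d₂ - 18*a₁*c₁^2*d₂ - 27*a₁*c₁*d₁*c₂ - 27*a₁*d₁^2*b₂ + 3*b₁^2*c₁*d₂ + 18*b₁^2*d₁*c₂ - 3*b₁*c₁^2*c₂ + 9*b₁*c₁*d₁*b₂ + 27*b₁*a₂*d₂^2 - 9*b₁*b₂*c₂*d₂ + 2*b₁*c₂^3 - 2*c₁^3*b₂ + 27*c₁*a₂*c₂*d₂ - 18*c₁*b₂^2*d₂ + 3*c₁*b₂*c₂^2 - 27*d₁*a₂*b₂*d₂ + 18*d₁*a₂*c₂^2 - 3*d₁*b₂^2*c₂) = 0)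
    (hE5 : (-27*a₁*c₁*d₁*d₂ - 27*a₁*d₁^2*c₂ + 18*b₁^2*d₁*d₂ - 3*b₁*c₁^2*d₂ + 9*b₁*c₁*d₁*c₂ - 2*c₁^3*c₂ + 27*c₁*a₂*d₂^2 - 9*c₁*b₂*c₂*d₂ + 2*c₁*c₂^3 + 27*d₁*a₂*c₂*d₂ - 18*d₁*b₂^2*d₂ + 3*d₁*b₂*c₂^2) = 0)
    (hE6 : (-27*a₁*d₁^2*d₂ + 9*b₁*c₁*d₁*d₂ - 2*c₁^3*d₂ + 27*d₁*a₂*d₂^2 - 9*d₁*b₂*c₂*d₂ + 2*d₁*c₂^3) = 0) :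
    ((a₂ = a₁ ∧ b₂ = b₁ ∧ c₂ = c₁ ∧ d₂ = d₁)
      ∨ (a₂ = -a₁ ∧ b₂ = -b₁ ∧ c₂ = -c₁ ∧ d₂ = -d₁)) := by
  subst he hf hg hh
  have hE0' : (l - l^3) * (27*a₁^3*d₁ - 9*a₁^2*b₁*c₁ + 2*a₁*b₁^3) = 0 := by linear_combination hE0
  have hE1' : (l - l^3) * (54*a₁^2*b₁*d₁ - 18*a₁^2*c₁^2 - 6*a₁*b₁^2*c₁ + 2*b₁^4) = 0 := by linear_combination hE1
  have hE2' : (l - l^3) * (45*a₁*b₁^2*d₁ - 30*a₁*b₁*c₁^2 + 5*b₁^3*c₁) = 0 := by linear_combination hE2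
  have hE3' : (l - l^3) * (-20*a₁*c₁^3 + 20*b₁^3*d₁) = 0 := by linear_combination hE3
  have hE4' : (l - l^3) * (-45*a₁*c₁^2*d₁ + 30*b₁^2*c₁*d₁ - 5*b₁*c₁^3) = 0 := by linear_combination hE4
  have hE5' : (l - l^3) * (-54*a₁*c₁*d₁^2 + 18*b₁^2*d₁^2 + 6*b₁*c₁^2*d₁ - 2*c₁^4) = 0 := by linear_combination hE5
  have hE6' : (l - l^3) * (-27*a₁*d₁^3 + 9*b₁*c₁*d₁^2 - 2*c₁^3*d₁) = 0 := by linear_combination hE6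
  have hl4 : cubicDisc a₁ b₁ c₁ d₁ = cubicDisc (l*a₁) (l*b₁) (l*c₁) (l*d₁) := hΔeq
  rcases cubic_aux h3 a₁ b₁ c₁ d₁ l hΔ hl4 hE0' hE1' hE2' hE3' hE4' hE5' hE6' with hl | hl
  · left
    refine ⟨?_, ?_, ?_, ?_⟩ <;> rw [hl] <;> ring
  · right
    refine ⟨?_, ?_, ?_, ?_⟩ <;> rw [hl] <;> ring

open MvPolynomial in
set_option maxHeartbeats 4000000 in
/-- The bicovariant `B_{g₁,g₂}` of two binary cubics with equal nonzero
discriminant is divisible by `X₁Y₂ − X₂Y₁` if and only if `g₂ = ±g₁`. -/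
theorem bicov_dvd_diag_iff {K : Type*} [Field K]
    (h2 : (2:K) ≠ 0) (h3 : (3:K) ≠ 0)
    (a₁ b₁ c₁ d₁ a₂ b₂ c₂ d₂ : K)
    (hΔeq : cubicDisc a₁ b₁ c₁ d₁ = cubicDisc a₂ b₂ c₂ d₂)
    (hΔ : cubicDisc a₁ b₁ c₁ d₁ ≠ 0) :
    ((X 0 * X 3 - X 2 * X 1 : MvPolynomial (Fin 4) K)
        ∣ bicov a₁ b₁ c₁ d₁ a₂ b₂ c₂ d₂)
    ↔ ((a₂ = a₁ ∧ b₂ = b₁ ∧ c₂ = c₁ ∧ d₂ = d₁)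
      ∨ (a₂ = -a₁ ∧ b₂ = -b₁ ∧ c₂ = -c₁ ∧ d₂ = -d₁)) := by
  constructor
  · rintro ⟨Q, hQ⟩
    have hτ : (Polynomial.C (27*a₁^2*d₁*a₂ - 9*a₁*b₁*c₁*a₂ - 27*a₁*a₂^2*d₂ + 9*a₁*a₂*b₂*c₂ - 2*a₁*b₂^3 + 2*b₁^3*a₂) * Polynomial.X ^ 6 + Polynomial.C (27*a₁^2*d₁*b₂ - 9*a₁*b₁*c₁*b₂ + 27*a₁*b₁*d₁*a₂ - 18*a₁*c₁^2*a₂ - 27*a₁*a₂*b₂*d₂ + 18*a₁*a₂*c₂^2 - 3*a₁*b₂^2*c₂ + 2*b₁^3*b₂ + 3*b₁^2*c₁*a₂ - 27*b₁*a₂^2*d₂ + 9*b₁*a₂*b₂*c₂ - 2*b₁*b₂^3) * Polynomial.X ^ 5 + Polynomial.C (27*a₁^2*d₁*c₂ - 9*a₁*b₁*c₁*c₂ + 27*a₁*b₁*d₁*b₂ - 18*a₁*c₁^2*b₂ - 27*a₁*c₁*d₁*a₂ + 27*a₁*a₂*c₂*d₂ - 18*a₁*b₂^2*d₂ + 3*a₁*b₂*c₂^2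 + 2*b₁^3*c₂ + 3*b₁^2*c₁*b₂ + 18*b₁^2*d₁*a₂ - 3*b₁*c₁^2*a₂ - 27*b₁*a₂*b₂*d₂ + 18*b₁*a₂*c₂^2 - 3*b₁*b₂^2*c₂ - 27*c₁*a₂^2*d₂ + 9*c₁*a₂*b₂*c₂ - 2*c₁*b₂^3) * Polynomial.X ^ 4 + Polynomial.C (27*a₁^2*d₁*d₂ - 9*a₁*b₁*c₁*d₂ + 27*a₁*b₁*d₁*c₂ - 18*a₁*c₁^2*c₂ - 27*a₁*c₁*d₁*b₂ - 27*a₁*d₁^2*a₂ + 27*a₁*a₂*d₂^2 - 9*a₁*b₂*c₂*d₂ + 2*a₁*c₂^3 + 2*b₁^3*d₂ + 3*b₁^2*c₁*c₂ + 18*b₁^2*d₁*b₂ - 3*b₁*c₁^2*b₂ + 9*b₁*c₁*d₁*a₂ + 27*b₁*a₂*c₂*d₂ - 18*b₁*b₂^2*d₂ + 3*b₁*b₂*c₂^2 - 2*c₁^3*a₂ - 27*c₁*a₂*b₂*d₂ + 18*c₁*a₂*c₂^2 - 3*c₁*b₂^2*c₂ - 27*d₁*a₂^2*d₂ + 9*d₁*a₂*b₂*c₂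 - 2*d₁*b₂^3) * Polynomial.X ^ 3 + Polynomial.C (27*a₁*b₁*d₁*d₂ - 18*a₁*c₁^2*d₂ - 27*a₁*c₁*d₁*c₂ - 27*a₁*d₁^2*b₂ + 3*b₁^2*c₁*d₂ + 18*b₁^2*d₁*c₂ - 3*b₁*c₁^2*c₂ + 9*b₁*c₁*d₁*b₂ + 27*b₁*a₂*d₂^2 - 9*b₁*b₂*c₂*d₂ + 2*b₁*c₂^3 - 2*c₁^3*b₂ + 27*c₁*a₂*c₂*d₂ - 18*c₁*b₂^2*d₂ + 3*c₁*b₂*c₂^2 - 27*d₁*a₂*b₂*d₂ + 18*d₁*a₂*c₂^2 - 3*d₁*b₂^2*c₂) * Polynomial.X ^ 2 + Polynomial.C (-27*a₁*c₁*d₁*d₂ - 27*a₁*d₁^2*c₂ + 18*b₁^2*d₁*d₂ - 3*b₁*c₁^2*d₂ + 9*b₁*c₁*d₁*c₂ - 2*c₁^3*c₂ + 27*c₁*a₂*d₂^2 - 9*c₁*b₂*c₂*d₂ + 2*c₁*c₂^3 + 27*d₁*a₂*c₂*d₂ - 18*d₁*b₂^2*d₂ + 3*d₁*b₂*c₂^2)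 * Polynomial.X ^ 1 + Polynomial.C (-27*a₁*d₁^2*d₂ + 9*b₁*c₁*d₁*d₂ - 2*c₁^3*d₂ + 27*d₁*a₂*d₂^2 - 9*d₁*b₂*c₂*d₂ + 2*d₁*c₂^3) * Polynomial.X ^ 0 : Polynomial K) = 0 := by
      have h1 : (MvPolynomial.aeval ![(Polynomial.X : Polynomial K), 1, Polynomial.X, 1])
          (bicov a₁ b₁ c₁ d₁ a₂ b₂ c₂ d₂) = 0 := by
        rw [hQ, map_mul]
        have h0 : (MvPolynomial.aeval ![(Polynomial.X : Polynomial K), 1, Polynomial.X, 1])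
            ((X 0 * X 3 - X 2 * X 1 : MvPolynomial (Fin 4) K)) = 0 := by
          simp
        rw [h0, zero_mul]
      rw [← h1]
      simp only [bicov, bcF, bcG, map_add, map_sub, map_mul, map_pow, map_neg, map_ofNat,
        MvPolynomial.aeval_X, MvPolynomial.aeval_C, Polynomial.algebraMap_eq,
        Matrix.cons_val_zero, Matrix.cons_val_one, Matrix.head_cons,
        Matrix.cons_val_two, Matrix.tail_cons, Matrix.cons_val_three, Matrix.head_fin_const]
      ring
    have hE0 : (27*a₁^2*d₁*a₂ - 9*a₁*b₁*c₁*a₂ - 27*a₁*a₂^2*d₂ + 9*a₁*a₂*b₂*c₂ - 2*a₁*b₂^3 + 2*b₁^3*a₂ : K) = 0 := by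
      have hco := congrArg (fun p => Polynomial.coeff p 6) hτ
      simp only [Polynomial.coeff_add, Polynomial.coeff_C_mul, Polynomial.coeff_X_pow, Polynomial.coeff_zero] at hco
      norm_num at hco
      linear_combination hco
    have hE1 : (27*a₁^2*d₁*b₂ - 9*a₁*b₁*c₁*b₂ + 27*a₁*b₁*d₁*a₂ - 18*a₁*c₁^2*a₂ - 27*a₁*a₂*b₂*d₂ + 18*a₁*a₂*c₂^2 - 3*a₁*b₂^2*c₂ + 2*b₁^3*b₂ + 3*b₁^2*c₁*a₂ - 27*b₁*a₂^2*d₂ + 9*b₁*a₂*b₂*c₂ - 2*b₁*b₂^3 : K) = 0 := by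
      have hco := congrArg (fun p => Polynomial.coeff p 5) hτ
      simp only [Polynomial.coeff_add, Polynomial.coeff_C_mul, Polynomial.coeff_X_pow, Polynomial.coeff_zero] at hco
      norm_num at hco
      linear_combination hco
    have hE2 : (27*a₁^2*d₁*c₂ - 9*a₁*b₁*c₁*c₂ + 27*a₁*b₁*d₁*b₂ - 18*a₁*c₁^2*b₂ - 27*a₁*c₁*d₁*a₂ + 27*a₁*a₂*c₂*d₂ - 18*a₁*b₂^2*d₂ + 3*a₁*b₂*c₂^2 + 2*b₁^3*c₂ + 3*b₁^2*c₁*b₂ + 18*b₁^2*d₁*a₂ - 3*b₁*c₁^2*a₂ - 27*b₁*a₂*b₂*d₂ + 18*b₁*a₂*c₂^2 - 3*b₁*b₂^2*c₂ - 27*c₁*a₂^2*d₂ + 9*c₁*a₂*b₂*c₂ - 2*c₁*b₂^3 : K) = 0 := by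
      have hco := congrArg (fun p => Polynomial.coeff p 4) hτ
      simp only [Polynomial.coeff_add, Polynomial.coeff_C_mul, Polynomial.coeff_X_pow, Polynomial.coeff_zero] at hco
      norm_num at hco
      linear_combination hco
    have hE3 : (27*a₁^2*d₁*d₂ - 9*a₁*b₁*c₁*d₂ + 27*a₁*b₁*d₁*c₂ - 18*a₁*c₁^2*c₂ - 27*a₁*c₁*d₁*b₂ - 27*a₁*d₁^2*a₂ + 27*a₁*a₂*d₂^2 - 9*a₁*b₂*c₂*d₂ + 2*a₁*c₂^3 + 2*b₁^3*d₂ + 3*b₁^2*c₁*c₂ + 18*b₁^2*d₁*b₂ - 3*b₁*c₁^2*b₂ + 9*b₁*c₁*d₁*a₂ + 27*b₁*a₂*c₂*d₂ - 18*b₁*b₂^2*d₂ + 3*b₁*b₂*c₂^2 - 2*c₁^3*a₂ - 27*c₁*a₂*b₂*d₂ + 18*c₁*a₂*c₂^2 - 3*c₁*b₂^2*c₂ - 27*d₁*a₂^2*d₂ + 9*d₁*a₂*b₂*c₂ - 2*d₁*b₂^3 : K) = 0 := by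
      have hco := congrArg (fun p => Polynomial.coeff p 3) hτ
      simp only [Polynomial.coeff_add, Polynomial.coeff_C_mul, Polynomial.coeff_X_pow, Polynomial.coeff_zero] at hco
      norm_num at hco
      linear_combination hco
    have hE4 : (27*a₁*b₁*d₁*d₂ - 18*a₁*c₁^2*d₂ - 27*a₁*c₁*d₁*c₂ - 27*a₁*d₁^2*b₂ + 3*b₁^2*c₁*d₂ + 18*b₁^2*d₁*c₂ - 3*b₁*c₁^2*c₂ + 9*b₁*c₁*d₁*b₂ + 27*b₁*a₂*d₂^2 - 9*b₁*b₂*c₂*d₂ + 2*b₁*c₂^3 - 2*c₁^3*b₂ + 27*c₁*a₂*c₂*d₂ - 18*c₁*b₂^2*d₂ + 3*c₁*b₂*c₂^2 - 27*d₁*a₂*b₂*d₂ + 18*d₁*a₂*c₂^2 - 3*d₁*b₂^2*c₂ : K) = 0 := by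
      have hco := congrArg (fun p => Polynomial.coeff p 2) hτ
      simp only [Polynomial.coeff_add, Polynomial.coeff_C_mul, Polynomial.coeff_X_pow, Polynomial.coeff_zero] at hco
      norm_num at hco
      linear_combination hco
    have hE5 : (-27*a₁*c₁*d₁*d₂ - 27*a₁*d₁^2*c₂ + 18*b₁^2*d₁*d₂ - 3*b₁*c₁^2*d₂ + 9*b₁*c₁*d₁*c₂ - 2*c₁^3*c₂ + 27*c₁*a₂*d₂^2 - 9*c₁*b₂*c₂*d₂ + 2*c₁*c₂^3 + 27*d₁*a₂*c₂*d₂ - 18*d₁*b₂^2*d₂ + 3*d₁*b₂*c₂^2 : K) = 0 := by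
      have hco := congrArg (fun p => Polynomial.coeff p 1) hτ
      simp only [Polynomial.coeff_add, Polynomial.coeff_C_mul, Polynomial.coeff_X_pow, Polynomial.coeff_zero] at hco
      norm_num at hco
      linear_combination hco
    have hE6 : (-27*a₁*d₁^2*d₂ + 9*b₁*c₁*d₁*d₂ - 2*c₁^3*d₂ + 27*d₁*a₂*d₂^2 - 9*d₁*b₂*c₂*d₂ + 2*d₁*c₂^3 : K) = 0 := by
      have hco := congrArg (fun p => Polynomial.coeff p 0) hτ
      simp only [Polynomial.coeff_add, Polynomial.coeff_C_mul, Polynomial.coeff_X_pow, Polynomial.coeff_zero] at hco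
      norm_num at hco
      linear_combination hco
    have h8 : (8:K) ≠ 0 := by
      rw [show (8:K) = 2^3 by norm_num]; exact pow_ne_zero 3 h2
    have hc8 : (8:K) * cubicDisc a₁ b₁ c₁ d₁ ^ 3 ≠ 0 := mul_ne_zero h8 (pow_ne_zero _ hΔ)
    have hm01 : a₁ * b₂ - b₁ * a₂ = 0 := by
      have key : (8:K) * cubicDisc a₁ b₁ c₁ d₁ ^ 3 * (a₁ * b₂ - b₁ * a₂) = 0 := by
        simp only [cubicDisc]
        linear_combination (5832*a₁^4*b₁*d₁^5 - 972*a₁^4*c₁^2*d₁^4 - 9072*a₁^3*b₁^2*c₁*d₁^4 + 3672*a₁^3*b₁*c₁^3*d₁^3 - 360*a₁^3*c₁^5*d₁^2 + 2592*a₁^2*b₁^4*d₁^4 + 2232*a₁^2*b₁^3*c₁^2*d₁^3 - 2064*a₁^2*b₁^2*c₁^4*d₁^2 + 464*a₁^2*b₁*c₁^6*d₁ - 32*a₁^2*c₁^8 - 1920*a₁*b₁^5*c₁*d₁^3 + 1344*a₁*b₁^4*c₁^3*d₁^2 - 312*a₁*b₁^3*c₁^5*d₁ + 24*a₁*b₁^2*c₁^7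 + 256*b₁^7*d₁^3 - 192*b₁^6*c₁^2*d₁^2 + 48*b₁^5*c₁^4*d₁ - 4*b₁^4*c₁^6) * hE0 + (-2916*a₁^5*d₁^5 + 4860*a₁^4*b₁*c₁*d₁^4 - 1188*a₁^4*c₁^3*d₁^3 - 2160*a₁^3*b₁^3*d₁^4 - 972*a₁^3*b₁^2*c₁^2*d₁^3 + 828*a₁^3*b₁*c₁^4*d₁^2 - 112*a₁^3*c₁^6*d₁ + 1584*a₁^2*b₁^4*c₁*d₁^3 - 1052*a₁^2*b₁^3*c₁^3*d₁^2 + 228*a₁^2*b₁^2*c₁^5*d₁ - 16*a₁^2*b₁*c₁^7 - 256*a₁*b₁^6*d₁^3 + 192*a₁*b₁^5*c₁^2*d₁^2 - 48*a₁*b₁^4*c₁^4*d₁ + 4*a₁*b₁^3*c₁^6) * hE1 + (1944*a₁^4*b₁^2*d₁^4 - 1296*a₁^4*b₁*c₁^2*d₁^3 + 216*a₁^4*c₁^4*d₁^2 - 1296*a₁^3*b₁^3*c₁*d₁^3 + 1152*a₁^3*b₁^2*c₁^3*d₁^2 - 336*a₁^3*b₁*c₁^5*d₁ + 32*a₁^3*c₁^7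 + 288*a₁^2*b₁^5*d₁^3 - 264*a₁^2*b₁^4*c₁^2*d₁^2 + 80*a₁^2*b₁^3*c₁^4*d₁ - 8*a₁^2*b₁^2*c₁^6) * hE2 + (-2916*a₁^5*b₁*d₁^4 + 972*a₁^5*c₁^2*d₁^3 + 2268*a₁^4*b₁^2*c₁*d₁^3 - 1188*a₁^4*b₁*c₁^3*d₁^2 + 144*a₁^4*c₁^5*d₁ - 432*a₁^3*b₁^4*d₁^3 + 36*a₁^3*b₁^3*c₁^2*d₁^2 + 84*a₁^3*b₁^2*c₁^4*d₁ - 16*a₁^3*b₁*c₁^6 + 48*a₁^2*b₁^5*c₁*d₁^2 - 28*a₁^2*b₁^4*c₁^3*d₁ + 4*a₁^2*b₁^3*c₁^5) * hE3 + (2916*a₁^6*d₁^4 - 1944*a₁^5*b₁*c₁*d₁^3 + 216*a₁^5*c₁^3*d₁^2 + 216*a₁^4*b₁^3*d₁^3 + 144*a₁^4*b₁*c₁^4*d₁ - 32*a₁^4*c₁^6 + 144*a₁^3*b₁^4*c₁*d₁^2 - 136*a₁^3*b₁^3*c₁^3*d₁ + 24*a₁^3*b₁^2*c₁^5 - 32*a₁^2*b₁^6*d₁^2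 + 24*a₁^2*b₁^5*c₁^2*d₁ - 4*a₁^2*b₁^4*c₁^4) * hE4 + (-2916*a₁^6*c₁*d₁^3 + 972*a₁^5*b₁^2*d₁^3 + 2268*a₁^5*b₁*c₁^2*d₁^2 - 432*a₁^5*c₁^4*d₁ - 1188*a₁^4*b₁^3*c₁*d₁^2 + 36*a₁^4*b₁^2*c₁^3*d₁ + 48*a₁^4*b₁*c₁^5 + 144*a₁^3*b₁^5*d₁^2 + 84*a₁^3*b₁^4*c₁^2*d₁ - 28*a₁^3*b₁^3*c₁^4 - 16*a₁^2*b₁^6*c₁*d₁ + 4*a₁^2*b₁^5*c₁^3) * hE5 + (1944*a₁^6*c₁^2*d₁^2 - 1296*a₁^5*b₁^2*c₁*d₁^2 - 1296*a₁^5*b₁*c₁^3*d₁ + 288*a₁^5*c₁^5 + 216*a₁^4*b₁^4*d₁^2 + 1152*a₁^4*b₁^3*c₁^2*d₁ - 264*a₁^4*b₁^2*c₁^4 - 336*a₁^3*b₁^5*c₁*d₁ + 80*a₁^3*b₁^4*c₁^3 + 32*a₁^2*b₁^7*d₁ - 8*a₁^2*b₁^6*c₁^2) * hE6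
      rcases mul_eq_zero.1 key with h | h
      · exact absurd h hc8
      · exact h
    have hm02 : a₁ * c₂ - c₁ * a₂ = 0 := by
      have key : (8:K) * cubicDisc a₁ b₁ c₁ d₁ ^ 3 * (a₁ * c₂ - c₁ * a₂) = 0 := by
        simp only [cubicDisc]
        linear_combination (2916*a₁^4*c₁*d₁^5 - 1944*a₁^3*b₁^2*d₁^5 - 3564*a₁^3*b₁*c₁^2*d₁^4 + 972*a₁^3*c₁^4*d₁^3 + 3456*a₁^2*b₁^3*c₁*d₁^4 - 180*a₁^2*b₁^2*c₁^3*d₁^3 - 492*a₁^2*b₁*c₁^5*d₁^2 + 80*a₁^2*c₁^7*d₁ - 288*a₁*b₁^5*d₁^4 - 1320*a₁*b₁^4*c₁^2*d₁^3 + 972*a₁*b₁^3*c₁^4*d₁^2 - 220*a₁*b₁^2*c₁^6*d₁ + 16*a₁*b₁*c₁^8 + 256*b₁^6*c₁*d₁^3 - 192*b₁^5*c₁^3*d₁^2 + 48*b₁^4*c₁^5*d₁ - 4*b₁^3*c₁^7) * hE0 + (2916*a₁^4*b₁*d₁^5 - 972*a₁^4*c₁^2*d₁^4 - 4212*a₁^3*b₁^2*c₁*d₁^4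 + 2484*a₁^3*b₁*c₁^3*d₁^3 - 360*a₁^3*c₁^5*d₁^2 + 432*a₁^2*b₁^4*d₁^4 + 1260*a₁^2*b₁^3*c₁^2*d₁^3 - 1236*a₁^2*b₁^2*c₁^4*d₁^2 + 352*a₁^2*b₁*c₁^6*d₁ - 32*a₁^2*c₁^8 - 336*a₁*b₁^5*c₁*d₁^3 + 292*a₁*b₁^4*c₁^3*d₁^2 - 84*a₁*b₁^3*c₁^5*d₁ + 8*a₁*b₁^2*c₁^7) * hE1 + (-2916*a₁^5*d₁^5 + 4860*a₁^4*b₁*c₁*d₁^4 - 1188*a₁^4*c₁^3*d₁^3 - 216*a₁^3*b₁^3*d₁^4 - 2268*a₁^3*b₁^2*c₁^2*d₁^3 + 1044*a₁^3*b₁*c₁^4*d₁^2 - 112*a₁^3*c₁^6*d₁ + 288*a₁^2*b₁^4*c₁*d₁^3 + 100*a₁^2*b₁^3*c₁^3*d₁^2 - 108*a₁^2*b₁^2*c₁^5*d₁ + 16*a₁^2*b₁*c₁^7 + 32*a₁*b₁^6*d₁^3 - 72*a₁*b₁^5*c₁^2*d₁^2 + 32*a₁*b₁^4*c₁^4*d₁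 - 4*a₁*b₁^3*c₁^6) * hE2 + (-972*a₁^4*b₁^2*d₁^4 - 324*a₁^4*b₁*c₁^2*d₁^3 + 216*a₁^4*c₁^4*d₁^2 + 972*a₁^3*b₁^3*c₁*d₁^3 - 36*a₁^3*b₁^2*c₁^3*d₁^2 - 192*a₁^3*b₁*c₁^5*d₁ + 32*a₁^3*c₁^7 - 144*a₁^2*b₁^5*d₁^3 - 228*a₁^2*b₁^4*c₁^2*d₁^2 + 164*a₁^2*b₁^3*c₁^4*d₁ - 24*a₁^2*b₁^2*c₁^6 + 48*a₁*b₁^6*c₁*d₁^2 - 28*a₁*b₁^5*c₁^3*d₁ + 4*a₁*b₁^4*c₁^5) * hE3 + (972*a₁^5*c₁^2*d₁^3 + 324*a₁^4*b₁^2*c₁*d₁^3 - 972*a₁^4*b₁*c₁^3*d₁^2 + 144*a₁^4*c₁^5*d₁ - 216*a₁^3*b₁^4*d₁^3 + 36*a₁^3*b₁^3*c₁^2*d₁^2 + 228*a₁^3*b₁^2*c₁^4*d₁ - 48*a₁^3*b₁*c₁^6 + 192*a₁^2*b₁^5*c₁*d₁^2 - 164*a₁^2*b₁^4*c₁^3*d₁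 + 28*a₁^2*b₁^3*c₁^5 - 32*a₁*b₁^7*d₁^2 + 24*a₁*b₁^6*c₁^2*d₁ - 4*a₁*b₁^5*c₁^4) * hE4 + (2916*a₁^6*d₁^4 - 4860*a₁^5*b₁*c₁*d₁^3 + 216*a₁^5*c₁^3*d₁^2 + 1188*a₁^4*b₁^3*d₁^3 + 2268*a₁^4*b₁^2*c₁^2*d₁^2 - 288*a₁^4*b₁*c₁^4*d₁ - 32*a₁^4*c₁^6 - 1044*a₁^3*b₁^4*c₁*d₁^2 - 100*a₁^3*b₁^3*c₁^3*d₁ + 72*a₁^3*b₁^2*c₁^5 + 112*a₁^2*b₁^6*d₁^2 + 108*a₁^2*b₁^5*c₁^2*d₁ - 32*a₁^2*b₁^4*c₁^4 - 16*a₁*b₁^7*c₁*d₁ + 4*a₁*b₁^6*c₁^3) * hE5 + (-2916*a₁^6*c₁*d₁^3 + 972*a₁^5*b₁^2*d₁^3 + 4212*a₁^5*b₁*c₁^2*d₁^2 - 432*a₁^5*c₁^4*d₁ - 2484*a₁^4*b₁^3*c₁*d₁^2 - 1260*a₁^4*b₁^2*c₁^3*d₁ + 336*a₁^4*b₁*c₁^5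 + 360*a₁^3*b₁^5*d₁^2 + 1236*a₁^3*b₁^4*c₁^2*d₁ - 292*a₁^3*b₁^3*c₁^4 - 352*a₁^2*b₁^6*c₁*d₁ + 84*a₁^2*b₁^5*c₁^3 + 32*a₁*b₁^8*d₁ - 8*a₁*b₁^7*c₁^2) * hE6
      rcases mul_eq_zero.1 key with h | h
      · exact absurd h hc8
      · exact h
    have hm03 : a₁ * d₂ - d₁ * a₂ = 0 := by
      have key : (8:K) * cubicDisc a₁ b₁ c₁ d₁ ^ 3 * (a₁ * d₂ - d₁ * a₂) = 0 := by
        simp only [cubicDisc]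
        linear_combination (2916*a₁^4*d₁^6 - 4860*a₁^3*b₁*c₁*d₁^5 + 1188*a₁^3*c₁^3*d₁^4 + 2160*a₁^2*b₁^3*d₁^5 + 972*a₁^2*b₁^2*c₁^2*d₁^4 - 828*a₁^2*b₁*c₁^4*d₁^3 + 112*a₁^2*c₁^6*d₁^2 - 1584*a₁*b₁^4*c₁*d₁^4 + 1052*a₁*b₁^3*c₁^3*d₁^3 - 228*a₁*b₁^2*c₁^5*d₁^2 + 16*a₁*b₁*c₁^7*d₁ + 256*b₁^6*d₁^4 - 192*b₁^5*c₁^2*d₁^3 + 48*b₁^4*c₁^4*d₁^2 - 4*b₁^3*c₁^6*d₁) * hE0 + (-1944*a₁^3*b₁^2*d₁^5 + 1296*a₁^3*b₁*c₁^2*d₁^4 - 216*a₁^3*c₁^4*d₁^3 + 1296*a₁^2*b₁^3*c₁*d₁^4 - 1152*a₁^2*b₁^2*c₁^3*d₁^3 + 336*a₁^2*b₁*c₁^5*d₁^2 - 32*a₁^2*c₁^7*d₁ - 288*a₁*b₁^5*d₁^4 + 264*a₁*b₁^4*c₁^2*d₁^3 - 80*a₁*b₁^3*c₁^4*d₁^2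 + 8*a₁*b₁^2*c₁^6*d₁) * hE1 + (2916*a₁^4*b₁*d₁^5 - 972*a₁^4*c₁^2*d₁^4 - 2268*a₁^3*b₁^2*c₁*d₁^4 + 1188*a₁^3*b₁*c₁^3*d₁^3 - 144*a₁^3*c₁^5*d₁^2 + 432*a₁^2*b₁^4*d₁^4 - 36*a₁^2*b₁^3*c₁^2*d₁^3 - 84*a₁^2*b₁^2*c₁^4*d₁^2 + 16*a₁^2*b₁*c₁^6*d₁ - 48*a₁*b₁^5*c₁*d₁^3 + 28*a₁*b₁^4*c₁^3*d₁^2 - 4*a₁*b₁^3*c₁^5*d₁) * hE2 + (-2916*a₁^5*d₁^5 + 1944*a₁^4*b₁*c₁*d₁^4 - 216*a₁^4*c₁^3*d₁^3 - 216*a₁^3*b₁^3*d₁^4 - 144*a₁^3*b₁*c₁^4*d₁^2 + 32*a₁^3*c₁^6*d₁ - 144*a₁^2*b₁^4*c₁*d₁^3 + 136*a₁^2*b₁^3*c₁^3*d₁^2 - 24*a₁^2*b₁^2*c₁^5*d₁ + 32*a₁*b₁^6*d₁^3 - 24*a₁*b₁^5*c₁^2*d₁^2 + 4*a₁*b₁^4*c₁^4*d₁)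 * hE3 + (2916*a₁^5*c₁*d₁^4 - 972*a₁^4*b₁^2*d₁^4 - 2268*a₁^4*b₁*c₁^2*d₁^3 + 432*a₁^4*c₁^4*d₁^2 + 1188*a₁^3*b₁^3*c₁*d₁^3 - 36*a₁^3*b₁^2*c₁^3*d₁^2 - 48*a₁^3*b₁*c₁^5*d₁ - 144*a₁^2*b₁^5*d₁^3 - 84*a₁^2*b₁^4*c₁^2*d₁^2 + 28*a₁^2*b₁^3*c₁^4*d₁ + 16*a₁*b₁^6*c₁*d₁^2 - 4*a₁*b₁^5*c₁^3*d₁) * hE4 + (-1944*a₁^5*c₁^2*d₁^3 + 1296*a₁^4*b₁^2*c₁*d₁^3 + 1296*a₁^4*b₁*c₁^3*d₁^2 - 288*a₁^4*c₁^5*d₁ - 216*a₁^3*b₁^4*d₁^3 - 1152*a₁^3*b₁^3*c₁^2*d₁^2 + 264*a₁^3*b₁^2*c₁^4*d₁ + 336*a₁^2*b₁^5*c₁*d₁^2 - 80*a₁^2*b₁^4*c₁^3*d₁ - 32*a₁*b₁^7*d₁^2 + 8*a₁*b₁^6*c₁^2*d₁) * hE5 + (2916*a₁^6*d₁^4 -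 4860*a₁^5*b₁*c₁*d₁^3 + 2160*a₁^5*c₁^3*d₁^2 + 1188*a₁^4*b₁^3*d₁^3 + 972*a₁^4*b₁^2*c₁^2*d₁^2 - 1584*a₁^4*b₁*c₁^4*d₁ + 256*a₁^4*c₁^6 - 828*a₁^3*b₁^4*c₁*d₁^2 + 1052*a₁^3*b₁^3*c₁^3*d₁ - 192*a₁^3*b₁^2*c₁^5 + 112*a₁^2*b₁^6*d₁^2 - 228*a₁^2*b₁^5*c₁^2*d₁ + 48*a₁^2*b₁^4*c₁^4 + 16*a₁*b₁^7*c₁*d₁ - 4*a₁*b₁^6*c₁^3) * hE6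
      rcases mul_eq_zero.1 key with h | h
      · exact absurd h hc8
      · exact h
    have hm12 : b₁ * c₂ - c₁ * b₂ = 0 := by
      have key : (8:K) * cubicDisc a₁ b₁ c₁ d₁ ^ 3 * (b₁ * c₂ - c₁ * b₂) = 0 := by
        simp only [cubicDisc]
        linear_combination (-2916*a₁^3*b₁*c₁*d₁^5 + 972*a₁^3*c₁^3*d₁^4 - 1944*a₁^2*b₁^3*d₁^5 + 5508*a₁^2*b₁^2*c₁^2*d₁^4 - 2700*a₁^2*b₁*c₁^4*d₁^3 + 360*a₁^2*c₁^6*d₁^2 + 864*a₁*b₁^4*c₁*d₁^4 - 2412*a₁*b₁^3*c₁^3*d₁^3 + 1572*a₁*b₁^2*c₁^5*d₁^2 - 384*a₁*b₁*c₁^7*d₁ + 32*a₁*c₁^9 - 288*b₁^6*d₁^4 + 600*b₁^5*c₁^2*d₁^3 - 372*b₁^4*c₁^4*d₁^2 + 92*b₁^3*c₁^6*d₁ - 8*b₁^2*c₁^8) * hE0 + (2916*a₁^4*c₁*d₁^5 + 2916*a₁^3*b₁^2*d₁^5 - 5832*a₁^3*b₁*c₁^2*d₁^4 + 1188*a₁^3*c₁^4*d₁^3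 - 2052*a₁^2*b₁^3*c₁*d₁^4 + 3456*a₁^2*b₁^2*c₁^3*d₁^3 - 1188*a₁^2*b₁*c₁^5*d₁^2 + 112*a₁^2*c₁^7*d₁ + 432*a₁*b₁^5*d₁^4 - 324*a₁*b₁^4*c₁^2*d₁^3 - 184*a₁*b₁^3*c₁^4*d₁^2 + 124*a₁*b₁^2*c₁^6*d₁ - 16*a₁*b₁*c₁^8 - 80*b₁^6*c₁*d₁^3 + 100*b₁^5*c₁^3*d₁^2 - 36*b₁^4*c₁^5*d₁ + 4*b₁^3*c₁^7) * hE1 + (-2916*a₁^4*b₁*d₁^5 + 2916*a₁^3*b₁^2*c₁*d₁^4 + 108*a₁^3*b₁*c₁^3*d₁^3 - 216*a₁^3*c₁^5*d₁^2 - 216*a₁^2*b₁^4*d₁^4 - 972*a₁^2*b₁^3*c₁^2*d₁^3 - 108*a₁^2*b₁^2*c₁^4*d₁^2 + 224*a₁^2*b₁*c₁^6*d₁ - 32*a₁^2*c₁^8 + 364*a₁*b₁^4*c₁^3*d₁^2 - 188*a₁*b₁^3*c₁^5*d₁ + 24*a₁*b₁^2*c₁^7 + 32*b₁^7*d₁^3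 - 72*b₁^6*c₁^2*d₁^2 + 32*b₁^5*c₁^4*d₁ - 4*b₁^4*c₁^6) * hE2 + (2916*a₁^4*b₁*c₁*d₁^4 - 972*a₁^4*c₁^3*d₁^3 - 972*a₁^3*b₁^3*d₁^4 - 2592*a₁^3*b₁^2*c₁^2*d₁^3 + 1404*a₁^3*b₁*c₁^4*d₁^2 - 144*a₁^3*c₁^6*d₁ + 1404*a₁^2*b₁^4*c₁*d₁^3 - 72*a₁^2*b₁^3*c₁^3*d₁^2 - 276*a₁^2*b₁^2*c₁^5*d₁ + 48*a₁^2*b₁*c₁^7 - 144*a₁*b₁^6*d₁^3 - 276*a₁*b₁^5*c₁^2*d₁^2 + 192*a₁*b₁^4*c₁^4*d₁ - 28*a₁*b₁^3*c₁^6 + 48*b₁^7*c₁*d₁^2 - 28*b₁^6*c₁^3*d₁ + 4*b₁^5*c₁^5) * hE3 + (-2916*a₁^5*c₁*d₁^4 + 2916*a₁^4*b₁*c₁^2*d₁^3 - 216*a₁^4*c₁^4*d₁^2 + 108*a₁^3*b₁^3*c₁*d₁^3 - 972*a₁^3*b₁^2*c₁^3*d₁^2 + 32*a₁^3*c₁^7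 - 216*a₁^2*b₁^5*d₁^3 - 108*a₁^2*b₁^4*c₁^2*d₁^2 + 364*a₁^2*b₁^3*c₁^4*d₁ - 72*a₁^2*b₁^2*c₁^6 + 224*a₁*b₁^6*c₁*d₁^2 - 188*a₁*b₁^5*c₁^3*d₁ + 32*a₁*b₁^4*c₁^5 - 32*b₁^8*d₁^2 + 24*b₁^7*c₁^2*d₁ - 4*b₁^6*c₁^4) * hE4 + (2916*a₁^5*b₁*d₁^4 + 2916*a₁^5*c₁^2*d₁^3 - 5832*a₁^4*b₁^2*c₁*d₁^3 - 2052*a₁^4*b₁*c₁^3*d₁^2 + 432*a₁^4*c₁^5*d₁ + 1188*a₁^3*b₁^4*d₁^3 + 3456*a₁^3*b₁^3*c₁^2*d₁^2 - 324*a₁^3*b₁^2*c₁^4*d₁ - 80*a₁^3*b₁*c₁^6 - 1188*a₁^2*b₁^5*c₁*d₁^2 - 184*a₁^2*b₁^4*c₁^3*d₁ + 100*a₁^2*b₁^3*c₁^5 + 112*a₁*b₁^7*d₁^2 + 124*a₁*b₁^6*c₁^2*d₁ - 36*a₁*b₁^5*c₁^4 - 16*b₁^8*c₁*d₁ + 4*b₁^7*c₁^3)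 * hE5 + (-2916*a₁^5*b₁*c₁*d₁^3 - 1944*a₁^5*c₁^3*d₁^2 + 972*a₁^4*b₁^3*d₁^3 + 5508*a₁^4*b₁^2*c₁^2*d₁^2 + 864*a₁^4*b₁*c₁^4*d₁ - 288*a₁^4*c₁^6 - 2700*a₁^3*b₁^4*c₁*d₁^2 - 2412*a₁^3*b₁^3*c₁^3*d₁ + 600*a₁^3*b₁^2*c₁^5 + 360*a₁^2*b₁^6*d₁^2 + 1572*a₁^2*b₁^5*c₁^2*d₁ - 372*a₁^2*b₁^4*c₁^4 - 384*a₁*b₁^7*c₁*d₁ + 92*a₁*b₁^6*c₁^3 + 32*b₁^9*d₁ - 8*b₁^8*c₁^2) * hE6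
      rcases mul_eq_zero.1 key with h | h
      · exact absurd h hc8
      · exact h
    have hm13 : b₁ * d₂ - d₁ * b₂ = 0 := by
      have key : (8:K) * cubicDisc a₁ b₁ c₁ d₁ ^ 3 * (b₁ * d₂ - d₁ * b₂) = 0 := by
        simp only [cubicDisc]
        linear_combination (-2916*a₁^3*b₁*d₁^6 + 972*a₁^3*c₁^2*d₁^5 + 4212*a₁^2*b₁^2*c₁*d₁^5 - 2484*a₁^2*b₁*c₁^3*d₁^4 + 360*a₁^2*c₁^5*d₁^3 - 432*a₁*b₁^4*d₁^5 - 1260*a₁*b₁^3*c₁^2*d₁^4 + 1236*a₁*b₁^2*c₁^4*d₁^3 - 352*a₁*b₁*c₁^6*d₁^2 + 32*a₁*c₁^8*d₁ + 336*b₁^5*c₁*d₁^4 - 292*b₁^4*c₁^3*d₁^3 + 84*b₁^3*c₁^5*d₁^2 - 8*b₁^2*c₁^7*d₁) * hE0 + (2916*a₁^4*d₁^6 - 4860*a₁^3*b₁*c₁*d₁^5 + 1188*a₁^3*c₁^3*d₁^4 + 216*a₁^2*b₁^3*d₁^5 + 2268*a₁^2*b₁^2*c₁^2*d₁^4 - 1044*a₁^2*b₁*c₁^4*d₁^3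 + 112*a₁^2*c₁^6*d₁^2 - 288*a₁*b₁^4*c₁*d₁^4 - 100*a₁*b₁^3*c₁^3*d₁^3 + 108*a₁*b₁^2*c₁^5*d₁^2 - 16*a₁*b₁*c₁^7*d₁ - 32*b₁^6*d₁^4 + 72*b₁^5*c₁^2*d₁^3 - 32*b₁^4*c₁^4*d₁^2 + 4*b₁^3*c₁^6*d₁) * hE1 + (972*a₁^3*b₁^2*d₁^5 + 324*a₁^3*b₁*c₁^2*d₁^4 - 216*a₁^3*c₁^4*d₁^3 - 972*a₁^2*b₁^3*c₁*d₁^4 + 36*a₁^2*b₁^2*c₁^3*d₁^3 + 192*a₁^2*b₁*c₁^5*d₁^2 - 32*a₁^2*c₁^7*d₁ + 144*a₁*b₁^5*d₁^4 + 228*a₁*b₁^4*c₁^2*d₁^3 - 164*a₁*b₁^3*c₁^4*d₁^2 + 24*a₁*b₁^2*c₁^6*d₁ - 48*b₁^6*c₁*d₁^3 + 28*b₁^5*c₁^3*d₁^2 - 4*b₁^4*c₁^5*d₁) * hE2 + (-972*a₁^4*c₁^2*d₁^4 - 324*a₁^3*b₁^2*c₁*d₁^4 + 972*a₁^3*b₁*c₁^3*d₁^3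 - 144*a₁^3*c₁^5*d₁^2 + 216*a₁^2*b₁^4*d₁^4 - 36*a₁^2*b₁^3*c₁^2*d₁^3 - 228*a₁^2*b₁^2*c₁^4*d₁^2 + 48*a₁^2*b₁*c₁^6*d₁ - 192*a₁*b₁^5*c₁*d₁^3 + 164*a₁*b₁^4*c₁^3*d₁^2 - 28*a₁*b₁^3*c₁^5*d₁ + 32*b₁^7*d₁^3 - 24*b₁^6*c₁^2*d₁^2 + 4*b₁^5*c₁^4*d₁) * hE3 + (-2916*a₁^5*d₁^5 + 4860*a₁^4*b₁*c₁*d₁^4 - 216*a₁^4*c₁^3*d₁^3 - 1188*a₁^3*b₁^3*d₁^4 - 2268*a₁^3*b₁^2*c₁^2*d₁^3 + 288*a₁^3*b₁*c₁^4*d₁^2 + 32*a₁^3*c₁^6*d₁ + 1044*a₁^2*b₁^4*c₁*d₁^3 + 100*a₁^2*b₁^3*c₁^3*d₁^2 - 72*a₁^2*b₁^2*c₁^5*d₁ - 112*a₁*b₁^6*d₁^3 - 108*a₁*b₁^5*c₁^2*d₁^2 + 32*a₁*b₁^4*c₁^4*d₁ + 16*b₁^7*c₁*d₁^2 - 4*b₁^6*c₁^3*d₁)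 * hE4 + (2916*a₁^5*c₁*d₁^4 - 972*a₁^4*b₁^2*d₁^4 - 4212*a₁^4*b₁*c₁^2*d₁^3 + 432*a₁^4*c₁^4*d₁^2 + 2484*a₁^3*b₁^3*c₁*d₁^3 + 1260*a₁^3*b₁^2*c₁^3*d₁^2 - 336*a₁^3*b₁*c₁^5*d₁ - 360*a₁^2*b₁^5*d₁^3 - 1236*a₁^2*b₁^4*c₁^2*d₁^2 + 292*a₁^2*b₁^3*c₁^4*d₁ + 352*a₁*b₁^6*c₁*d₁^2 - 84*a₁*b₁^5*c₁^3*d₁ - 32*b₁^8*d₁^2 + 8*b₁^7*c₁^2*d₁) * hE5 + (2916*a₁^5*b₁*d₁^4 - 1944*a₁^5*c₁^2*d₁^3 - 3564*a₁^4*b₁^2*c₁*d₁^3 + 3456*a₁^4*b₁*c₁^3*d₁^2 - 288*a₁^4*c₁^5*d₁ + 972*a₁^3*b₁^4*d₁^3 - 180*a₁^3*b₁^3*c₁^2*d₁^2 - 1320*a₁^3*b₁^2*c₁^4*d₁ + 256*a₁^3*b₁*c₁^6 - 492*a₁^2*b₁^5*c₁*d₁^2 + 972*a₁^2*b₁^4*c₁^3*d₁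 - 192*a₁^2*b₁^3*c₁^5 + 80*a₁*b₁^7*d₁^2 - 220*a₁*b₁^6*c₁^2*d₁ + 48*a₁*b₁^5*c₁^4 + 16*b₁^8*c₁*d₁ - 4*b₁^7*c₁^3) * hE6
      rcases mul_eq_zero.1 key with h | h
      · exact absurd h hc8
      · exact h
    have hm23 : c₁ * d₂ - d₁ * c₂ = 0 := by
      have key : (8:K) * cubicDisc a₁ b₁ c₁ d₁ ^ 3 * (c₁ * d₂ - d₁ * c₂) = 0 := by
        simp only [cubicDisc]
        linear_combination (1944*a₁^2*b₁^2*d₁^6 - 1296*a₁^2*b₁*c₁^2*d₁^5 + 216*a₁^2*c₁^4*d₁^4 - 1296*a₁*b₁^3*c₁*d₁^5 + 1152*a₁*b₁^2*c₁^3*d₁^4 - 336*a₁*b₁*c₁^5*d₁^3 + 32*a₁*c₁^7*d₁^2 + 288*b₁^5*d₁^5 - 264*b₁^4*c₁^2*d₁^4 + 80*b₁^3*c₁^4*d₁^3 - 8*b₁^2*c₁^6*d₁^2) * hE0 + (-2916*a₁^3*b₁*d₁^6 + 972*a₁^3*c₁^2*d₁^5 + 2268*a₁^2*b₁^2*c₁*d₁^5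 - 1188*a₁^2*b₁*c₁^3*d₁^4 + 144*a₁^2*c₁^5*d₁^3 - 432*a₁*b₁^4*d₁^5 + 36*a₁*b₁^3*c₁^2*d₁^4 + 84*a₁*b₁^2*c₁^4*d₁^3 - 16*a₁*b₁*c₁^6*d₁^2 + 48*b₁^5*c₁*d₁^4 - 28*b₁^4*c₁^3*d₁^3 + 4*b₁^3*c₁^5*d₁^2) * hE1 + (2916*a₁^4*d₁^6 - 1944*a₁^3*b₁*c₁*d₁^5 + 216*a₁^3*c₁^3*d₁^4 + 216*a₁^2*b₁^3*d₁^5 + 144*a₁^2*b₁*c₁^4*d₁^3 - 32*a₁^2*c₁^6*d₁^2 + 144*a₁*b₁^4*c₁*d₁^4 - 136*a₁*b₁^3*c₁^3*d₁^3 + 24*a₁*b₁^2*c₁^5*d₁^2 - 32*b₁^6*d₁^4 + 24*b₁^5*c₁^2*d₁^3 - 4*b₁^4*c₁^4*d₁^2) * hE2 + (-2916*a₁^4*c₁*d₁^5 + 972*a₁^3*b₁^2*d₁^5 + 2268*a₁^3*b₁*c₁^2*d₁^4 - 432*a₁^3*c₁^4*d₁^3 - 1188*a₁^2*b₁^3*c₁*d₁^4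 + 36*a₁^2*b₁^2*c₁^3*d₁^3 + 48*a₁^2*b₁*c₁^5*d₁^2 + 144*a₁*b₁^5*d₁^4 + 84*a₁*b₁^4*c₁^2*d₁^3 - 28*a₁*b₁^3*c₁^4*d₁^2 - 16*b₁^6*c₁*d₁^3 + 4*b₁^5*c₁^3*d₁^2) * hE3 + (1944*a₁^4*c₁^2*d₁^4 - 1296*a₁^3*b₁^2*c₁*d₁^4 - 1296*a₁^3*b₁*c₁^3*d₁^3 + 288*a₁^3*c₁^5*d₁^2 + 216*a₁^2*b₁^4*d₁^4 + 1152*a₁^2*b₁^3*c₁^2*d₁^3 - 264*a₁^2*b₁^2*c₁^4*d₁^2 - 336*a₁*b₁^5*c₁*d₁^3 + 80*a₁*b₁^4*c₁^3*d₁^2 + 32*b₁^7*d₁^3 - 8*b₁^6*c₁^2*d₁^2) * hE4 + (-2916*a₁^5*d₁^5 + 4860*a₁^4*b₁*c₁*d₁^4 - 2160*a₁^4*c₁^3*d₁^3 - 1188*a₁^3*b₁^3*d₁^4 - 972*a₁^3*b₁^2*c₁^2*d₁^3 + 1584*a₁^3*b₁*c₁^4*d₁^2 - 256*a₁^3*c₁^6*d₁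 + 828*a₁^2*b₁^4*c₁*d₁^3 - 1052*a₁^2*b₁^3*c₁^3*d₁^2 + 192*a₁^2*b₁^2*c₁^5*d₁ - 112*a₁*b₁^6*d₁^3 + 228*a₁*b₁^5*c₁^2*d₁^2 - 48*a₁*b₁^4*c₁^4*d₁ - 16*b₁^7*c₁*d₁^2 + 4*b₁^6*c₁^3*d₁) * hE5 + (5832*a₁^5*c₁*d₁^4 - 972*a₁^4*b₁^2*d₁^4 - 9072*a₁^4*b₁*c₁^2*d₁^3 + 2592*a₁^4*c₁^4*d₁^2 + 3672*a₁^3*b₁^3*c₁*d₁^3 + 2232*a₁^3*b₁^2*c₁^3*d₁^2 - 1920*a₁^3*b₁*c₁^5*d₁ + 256*a₁^3*c₁^7 - 360*a₁^2*b₁^5*d₁^3 - 2064*a₁^2*b₁^4*c₁^2*d₁^2 + 1344*a₁^2*b₁^3*c₁^4*d₁ - 192*a₁^2*b₁^2*c₁^6 + 464*a₁*b₁^6*c₁*d₁^2 - 312*a₁*b₁^5*c₁^3*d₁ + 48*a₁*b₁^4*c₁^5 - 32*b₁^8*d₁^2 + 24*b₁^7*c₁^2*d₁ - 4*b₁^6*c₁^4)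 * hE6
      rcases mul_eq_zero.1 key with h | h
      · exact absurd h hc8
      · exact h
    have hnz : a₁ ≠ 0 ∨ b₁ ≠ 0 ∨ c₁ ≠ 0 ∨ d₁ ≠ 0 := by
      by_contra hcon
      push_neg at hcon
      obtain ⟨ha, hb, hc, hd⟩ := hcon
      exact hΔ (by simp [cubicDisc, ha, hb, hc, hd])
    rcases hnz with hv | hv | hv | hv
    · exact cubic_aux2 h3 a₁ b₁ c₁ d₁ a₂ b₂ c₂ d₂ (a₂ / a₁) hΔ hΔeq
        (div_mul_cancel₀ a₂ hv).symm
        (by rw [div_mul_eq_mul_div, eq_div_iff hv]; linear_combination hm01)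
        (by rw [div_mul_eq_mul_div, eq_div_iff hv]; linear_combination hm02)
        (by rw [div_mul_eq_mul_div, eq_div_iff hv]; linear_combination hm03)
        hE0 hE1 hE2 hE3 hE4 hE5 hE6
    · exact cubic_aux2 h3 a₁ b₁ c₁ d₁ a₂ b₂ c₂ d₂ (b₂ / b₁) hΔ hΔeq
        (by rw [div_mul_eq_mul_div, eq_div_iff hv]; linear_combination -hm01)
        (div_mul_cancel₀ b₂ hv).symm
        (by rw [div_mul_eq_mul_div, eq_div_iff hv]; linear_combination hm12)
        (by rw [div_mul_eq_mul_div, eq_div_iff hv]; linear_combination hm13)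
        hE0 hE1 hE2 hE3 hE4 hE5 hE6
    · exact cubic_aux2 h3 a₁ b₁ c₁ d₁ a₂ b₂ c₂ d₂ (c₂ / c₁) hΔ hΔeq
        (by rw [div_mul_eq_mul_div, eq_div_iff hv]; linear_combination -hm02)
        (by rw [div_mul_eq_mul_div, eq_div_iff hv]; linear_combination -hm12)
        (div_mul_cancel₀ c₂ hv).symm
        (by rw [div_mul_eq_mul_div, eq_div_iff hv]; linear_combination hm23)
        hE0 hE1 hE2 hE3 hE4 hE5 hE6
    · exact cubic_aux2 h3 a₁ b₁ c₁ d₁ a₂ b₂ c₂ d₂ (d₂ / d₁) hΔ hΔeq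
        (by rw [div_mul_eq_mul_div, eq_div_iff hv]; linear_combination -hm03)
        (by rw [div_mul_eq_mul_div, eq_div_iff hv]; linear_combination -hm13)
        (by rw [div_mul_eq_mul_div, eq_div_iff hv]; linear_combination -hm23)
        (div_mul_cancel₀ d₂ hv).symm
        hE0 hE1 hE2 hE3 hE4 hE5 hE6
  · rintro (⟨ha, hb, hc, hd⟩ | ⟨ha, hb, hc, hd⟩)
    · refine ⟨C (18*a₁^2*c₁^2 - 12*a₁*b₁^2*c₁ + 2*b₁^4) * X 0^2 * X 2^2 + C (54*a₁^2*c₁*d₁ - 18*a₁*b₁^2*d₁ - 6*a₁*b₁*c₁^2 + 2*b₁^3*c₁) * X 0^2 * X 2 * X 3 + C (54*a₁^2*d₁^2 - 18*a₁*b₁*c₁*d₁ + 2*a₁*c₁^3 + 2*b₁^3*d₁) * X 0^2 * X 3^2 + C (54*a₁^2*c₁*d₁ - 18*a₁*b₁^2*d₁ - 6*a₁*b₁*c₁^2 + 2*b₁^3*c₁) * X 0 * X 1 * X 2^2 + C (54*a₁^2*d₁^2 + 36*a₁*b₁*c₁*d₁ - 16*a₁*c₁^3 - 16*b₁^3*d₁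 + 6*b₁^2*c₁^2) * X 0 * X 1 * X 2 * X 3 + C (54*a₁*b₁*d₁^2 - 18*a₁*c₁^2*d₁ - 6*b₁^2*c₁*d₁ + 2*b₁*c₁^3) * X 0 * X 1 * X 3^2 + C (54*a₁^2*d₁^2 - 18*a₁*b₁*c₁*d₁ + 2*a₁*c₁^3 + 2*b₁^3*d₁) * X 1^2 * X 2^2 + C (54*a₁*b₁*d₁^2 - 18*a₁*c₁^2*d₁ - 6*b₁^2*c₁*d₁ + 2*b₁*c₁^3) * X 1^2 * X 2 * X 3 + C (18*b₁^2*d₁^2 - 12*b₁*c₁^2*d₁ + 2*c₁^4) * X 1^2 * X 3^2, ?_⟩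
      rw [ha, hb, hc, hd]
      simp only [bicov, bcF, bcG, map_add, map_sub, map_mul, map_pow, map_neg, map_ofNat]
      ring
    · refine ⟨-(C (18*a₁^2*c₁^2 - 12*a₁*b₁^2*c₁ + 2*b₁^4) * X 0^2 * X 2^2 + C (54*a₁^2*c₁*d₁ - 18*a₁*b₁^2*d₁ - 6*a₁*b₁*c₁^2 + 2*b₁^3*c₁) * X 0^2 * X 2 * X 3 + C (54*a₁^2*d₁^2 - 18*a₁*b₁*c₁*d₁ + 2*a₁*c₁^3 + 2*b₁^3*d₁) * X 0^2 * X 3^2 + C (54*a₁^2*c₁*d₁ - 18*a₁*b₁^2*d₁ - 6*a₁*b₁*c₁^2 + 2*b₁^3*c₁) * X 0 * X 1 * X 2^2 + C (54*a₁^2*d₁^2 + 36*a₁*b₁*c₁*d₁ - 16*a₁*c₁^3 - 16*b₁^3*d₁ + 6*b₁^2*c₁^2) * X 0 * X 1 * X 2 * X 3 + C (54*a₁*b₁*d₁^2 - 18*a₁*c₁^2*d₁ - 6*b₁^2*c₁*d₁ + 2*b₁*c₁^3) * X 0 * X 1 * X 3^2 + C (54*a₁^2*d₁^2 - 18*a₁*b₁*c₁*d₁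 + 2*a₁*c₁^3 + 2*b₁^3*d₁) * X 1^2 * X 2^2 + C (54*a₁*b₁*d₁^2 - 18*a₁*c₁^2*d₁ - 6*b₁^2*c₁*d₁ + 2*b₁*c₁^3) * X 1^2 * X 2 * X 3 + C (18*b₁^2*d₁^2 - 12*b₁*c₁^2*d₁ + 2*c₁^4) * X 1^2 * X 3^2), ?_⟩
      rw [ha, hb, hc, hd]
      simp only [bicov, bcF, bcG, map_add, map_sub, map_mul, map_pow, map_neg, map_ofNat]
      ring
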